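/- Let n and r be positive integers and let ⊗^r : U_n → U_{n^r} be the continuous homomorphism A ↦ A ⊗ A ⊗ ⋯ ⊗ A (r-fold Kronecker product). Then for every 1 ≤ i < 2n and every x ∈ π_i(U_n), one has π_i(⊗^r)(x) = (r · n^{r−1}) • π_i(σ)(x) in the abelian group π_i(U_{n^r}) (written additively), where σ : U_n → U_{n^r} is A ↦ diag(A, I_{n^r − n}) and • denotes integer multiples. -/

import Mathlib

open Matrix Kronecker unitInterval Topology

noncomputable section

/-- The unitary group `U_n` of `n × n` complex matrices, with the subspace topology,
based at the identity matrix. -/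
abbrev U (n : ℕ) : Type := Matrix.unitaryGroup (Fin n) ℂ

namespace Paper

/-! ### Reindexing unitary matrices -/

/-- Reindexing a unitary matrix along an equivalence of index types. -/
def uReindex {ι κ : Type} [Fintype ι] [DecidableEq ι] [Fintype κ] [DecidableEq κ]
    (e : ι ≃ κ) (A : Matrix.unitaryGroup ι ℂ) : Matrix.unitaryGroup κ ℂ :=
  ⟨Matrix.reindex e e A.1, by
    rw [Matrix.mem_unitaryGroup_iff]
    have h : star ((Matrix.reindex e e) A.1) = Matrix.reindex e e (star A.1) := by
      simp [Matrix.star_eq_conjTranspose, Matrix.reindex_apply, Matrix.conjTranspose_submatrix]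
    rw [h, Matrix.reindex_apply, Matrix.reindex_apply, Matrix.submatrix_mul_equiv, A.2.2,
      Matrix.submatrix_one_equiv]⟩

@[simp] theorem uReindex_val {ι κ : Type} [Fintype ι] [DecidableEq ι] [Fintype κ] [DecidableEq κ]
    (e : ι ≃ κ) (A : Matrix.unitaryGroup ι ℂ) :
    (uReindex e A).1 = Matrix.reindex e e A.1 := rfl

theorem continuous_uReindex {ι κ : Type} [Fintype ι] [DecidableEq ι] [Fintype κ] [DecidableEq κ]
    (e : ι ≃ κ) : Continuous (uReindex (e := e)) :=
  Continuous.subtype_mk ((continuous_subtype_val).matrix_reindex e e) _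

@[simp] theorem uReindex_one {ι κ : Type} [Fintype ι] [DecidableEq ι] [Fintype κ] [DecidableEq κ]
    (e : ι ≃ κ) : uReindex e (1 : Matrix.unitaryGroup ι ℂ) = 1 :=
  Subtype.ext (by simp [uReindex, Matrix.reindex_apply, Matrix.submatrix_one_equiv])

/-- Transport along an equality of sizes. -/
def uCast {m k : ℕ} (h : m = k) (A : U m) : U k := uReindex (finCongr h) A

theorem continuous_uCast {m k : ℕ} (h : m = k) : Continuous (uCast h) :=
  continuous_uReindex _

@[simp] theorem uCast_one {m k : ℕ} (h : m = k) : uCast h (1 : U m) = 1 := uReindex_one _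

/-! ### Block sums and Kronecker products of unitary matrices -/

/-- The block sum `diag(A, B)` of unitary matrices, as an element of `U (m + n)`. -/
def bdiag2 {m n : ℕ} (A : U m) (B : U n) : U (m + n) :=
  ⟨Matrix.reindex finSumFinEquiv finSumFinEquiv (Matrix.fromBlocks A.1 0 0 B.1), by
    rw [Matrix.mem_unitaryGroup_iff]
    have h : star ((Matrix.reindex finSumFinEquiv finSumFinEquiv)
        (Matrix.fromBlocks A.1 0 0 B.1)) = Matrix.reindex finSumFinEquiv finSumFinEquiv
        (star (Matrix.fromBlocks A.1 0 0 B.1)) := by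
      simp [Matrix.star_eq_conjTranspose, Matrix.reindex_apply, Matrix.conjTranspose_submatrix]
    have hA : A.1 * A.1ᴴ = 1 := A.2.2
    have hB : B.1 * B.1ᴴ = 1 := B.2.2
    have h2 : Matrix.fromBlocks A.1 0 0 B.1 * star (Matrix.fromBlocks A.1 0 0 B.1) = 1 := by
      simp [Matrix.star_eq_conjTranspose, Matrix.fromBlocks_conjTranspose,
        Matrix.fromBlocks_multiply, hA, hB, Matrix.fromBlocks_one]
    rw [h, Matrix.reindex_apply, Matrix.reindex_apply, Matrix.submatrix_mul_equiv, h2,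
      Matrix.submatrix_one_equiv]⟩

@[simp] theorem bdiag2_one {m n : ℕ} : bdiag2 (1 : U m) (1 : U n) = 1 :=
  Subtype.ext (by simp [bdiag2, Matrix.fromBlocks_one, Matrix.reindex_apply,
    Matrix.submatrix_one_equiv])

theorem continuous_bdiag2 {m n : ℕ} :
    Continuous (fun p : U m × U n => bdiag2 p.1 p.2) := by
  apply Continuous.subtype_mk
  exact ((Continuous.matrix_fromBlocks (continuous_subtype_val.comp continuous_fst)
    continuous_const continuous_const
    (continuous_subtype_val.comp continuous_snd)).matrix_reindex _ _)

/-- The equivalence used to index an array of `r` blocks of size `n` by `Fin (r * n)`. -/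
def bde (r n : ℕ) : (Fin n × Fin r) ≃ Fin (r * n) :=
  (Equiv.prodComm (Fin n) (Fin r)).trans finProdFinEquiv

/-- The block-diagonal sum `diag(A 1, …, A r)` of a family of unitary matrices. -/
def blockDiagU {r n : ℕ} (A : Fin r → U n) : U (r * n) :=
  ⟨Matrix.reindex (bde r n) (bde r n) (Matrix.blockDiagonal fun j => (A j).1), by
    rw [Matrix.mem_unitaryGroup_iff]
    have h : star ((Matrix.reindex (bde r n) (bde r n))
        (Matrix.blockDiagonal fun j => (A j).1)) = Matrix.reindex (bde r n) (bde r n)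
        (star (Matrix.blockDiagonal fun j => (A j).1)) := by
      simp [Matrix.star_eq_conjTranspose, Matrix.reindex_apply, Matrix.conjTranspose_submatrix]
    have hA : ∀ j, (A j).1 * ((A j).1)ᴴ = 1 := fun j => (A j).2.2
    have h2 : (Matrix.blockDiagonal fun j => (A j).1) *
        star (Matrix.blockDiagonal fun j => (A j).1) = 1 := by
      rw [Matrix.star_eq_conjTranspose, Matrix.blockDiagonal_conjTranspose,
        ← Matrix.blockDiagonal_mul]
      have h1 : (fun k : Fin r => (A k).1 * ((A k).1)ᴴ) = (1 : Fin r → Matrix (Fin n) (Fin n) ℂ) :=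
        funext fun k => hA k
      rw [h1, Matrix.blockDiagonal_one]
    rw [h, Matrix.reindex_apply, Matrix.reindex_apply, Matrix.submatrix_mul_equiv, h2,
      Matrix.submatrix_one_equiv]⟩

@[simp] theorem blockDiagU_one {r n : ℕ} : blockDiagU (fun _ : Fin r => (1 : U n)) = 1 := by
  apply Subtype.ext
  have h1 : (fun _ : Fin r => ((1 : U n) : Matrix (Fin n) (Fin n) ℂ)) =
      (1 : Fin r → Matrix (Fin n) (Fin n) ℂ) := rfl
  show Matrix.reindex (bde r n) (bde r n) (Matrix.blockDiagonal _) = _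
  rw [h1, Matrix.blockDiagonal_one, Matrix.reindex_apply, Matrix.submatrix_one_equiv]
  rfl

theorem continuous_blockDiagU {X : Type} [TopologicalSpace X] {r n : ℕ} {A : X → Fin r → U n}
    (hA : ∀ j, Continuous fun x => A x j) : Continuous fun x => blockDiagU (A x) := by
  apply Continuous.subtype_mk
  exact (Continuous.matrix_blockDiagonal
    (continuous_pi fun j => (continuous_subtype_val.comp (hA j)))).matrix_reindex _ _

/-- The Kronecker product of unitary matrices, as an element of `U (m * n)`. -/
def kronU {m n : ℕ} (A : U m) (B : U n) : U (m * n) :=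
  ⟨Matrix.reindex finProdFinEquiv finProdFinEquiv (A.1 ⊗ₖ B.1), by
    rw [Matrix.mem_unitaryGroup_iff]
    have hstar : ∀ (C : Matrix (Fin m) (Fin m) ℂ) (D : Matrix (Fin n) (Fin n) ℂ),
        star (C ⊗ₖ D) = star C ⊗ₖ star D := by
      intro C D
      ext ⟨i, j⟩ ⟨k, l⟩
      simp [Matrix.star_eq_conjTranspose, Matrix.conjTranspose_apply,
        Matrix.kroneckerMap_apply, mul_comm]
    have h : star ((Matrix.reindex finProdFinEquiv finProdFinEquiv) (A.1 ⊗ₖ B.1)) =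
        Matrix.reindex finProdFinEquiv finProdFinEquiv (star (A.1 ⊗ₖ B.1)) := by
      simp [Matrix.star_eq_conjTranspose, Matrix.reindex_apply, Matrix.conjTranspose_submatrix]
    have h2 : (A.1 ⊗ₖ B.1) * star (A.1 ⊗ₖ B.1) = 1 := by
      rw [hstar, ← Matrix.mul_kronecker_mul, A.2.2, B.2.2, Matrix.one_kronecker_one]
    rw [h, Matrix.reindex_apply, Matrix.reindex_apply, Matrix.submatrix_mul_equiv, h2,
      Matrix.submatrix_one_equiv]⟩

@[simp] theorem kronU_one {m n : ℕ} : kronU (1 : U m) (1 : U n) = 1 :=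
  Subtype.ext (by simp [kronU, Matrix.one_kronecker_one, Matrix.reindex_apply,
    Matrix.submatrix_one_equiv])

theorem continuous_kronU {m n : ℕ} : Continuous fun p : U m × U n => kronU p.1 p.2 := by
  apply Continuous.subtype_mk
  apply Continuous.matrix_reindex _ finProdFinEquiv finProdFinEquiv
  apply continuous_matrix
  rintro ⟨i, j⟩ ⟨k, l⟩
  simp only [Matrix.kroneckerMap_apply]
  exact ((continuous_subtype_val.comp continuous_fst).matrix_elem i k).mul
    ((continuous_subtype_val.comp continuous_snd).matrix_elem j l)

/-! ### The induced map on homotopy groups -/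

/-- The map on generalized loops induced by a continuous basepoint-preserving map. -/
def loopMap {N : Type} {X Y : Type} [TopologicalSpace X] [TopologicalSpace Y]
    (f : C(X, Y)) {x : X} {y : Y} (hf : f x = y) (p : GenLoop N X x) : GenLoop N Y y :=
  ⟨f.comp p.1, fun t ht => by
    simp only [ContinuousMap.comp_apply]
    rw [p.2 t ht, hf]⟩

/-- The homomorphism `π_k(f)` induced on homotopy groups (based at the given points) by a
continuous basepoint-preserving map `f`, as a function. -/
def πMap (k : ℕ) {X Y : Type} [TopologicalSpace X] [TopologicalSpace Y]
    (f : C(X, Y)) {x : X} {y : Y} (hf : f x = y) :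
    HomotopyGroup (Fin k) X x → HomotopyGroup (Fin k) Y y :=
  Quotient.map (loopMap f hf)
    (fun _ _ h => h.elim fun H => ⟨H.compContinuousMap f⟩)

end Paper
/-! ### The standard stabilization and operation maps, as continuous maps -/

namespace Paper

/-- `est_{m,n} : U_m → U_{m+n}`, `A ↦ diag(A, I_n)`. -/
def est (m n : ℕ) : C(U m, U (m + n)) :=
  ⟨fun A => bdiag2 A 1, continuous_bdiag2.comp (continuous_id.prodMk continuous_const)⟩

theorem est_one (m n : ℕ) : est m n 1 = 1 := bdiag2_one

/-- `U_n → U_{m+n}`, `B ↦ diag(I_m, B)`. -/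
def est' (m n : ℕ) : C(U n, U (m + n)) :=
  ⟨fun B => bdiag2 1 B, continuous_bdiag2.comp (continuous_const.prodMk continuous_id)⟩

theorem est'_one (m n : ℕ) : est' m n 1 = 1 := bdiag2_one

/-- `s_j : U_n → U_{rn}` placing `A` in the `j`-th diagonal block (0-indexed) and identity
blocks elsewhere. -/
def sMap (n r : ℕ) (j : Fin r) : C(U n, U (r * n)) :=
  ⟨fun A => blockDiagU (fun k => if k = j then A else 1), by
    apply continuous_blockDiagU
    intro k
    by_cases hk : k = j
    · simp only [hk, if_true]; exact continuous_id
    · simp only [hk, if_false]; exact continuous_const⟩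

theorem sMap_one (n r : ℕ) (j : Fin r) : sMap n r j 1 = 1 := by
  show blockDiagU _ = 1
  have : (fun k : Fin r => if k = j then (1 : U n) else 1) = fun _ => (1 : U n) := by
    funext k; split <;> rfl
  rw [this, blockDiagU_one]

/-- The `r`-fold direct sum `⊕^r : U_n → U_{rn}`, `A ↦ diag(A, …, A)`. -/
def rSum (n r : ℕ) : C(U n, U (r * n)) :=
  ⟨fun A => blockDiagU (fun _ : Fin r => A), continuous_blockDiagU fun _ => continuous_id⟩

theorem rSum_one (n r : ℕ) : rSum n r 1 = 1 := blockDiagU_one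

/-- The direct sum `⊕ : U_m × U_n → U_{m+n}`, `(A, B) ↦ diag(A, B)`. -/
def dsum (m n : ℕ) : C(U m × U n, U (m + n)) :=
  ⟨fun p => bdiag2 p.1 p.2, continuous_bdiag2⟩

theorem dsum_one (m n : ℕ) : dsum m n 1 = 1 := bdiag2_one

/-- The tensor (Kronecker) product `⊗ : U_m × U_n → U_{mn}`. -/
def tens (m n : ℕ) : C(U m × U n, U (m * n)) :=
  ⟨fun p => kronU p.1 p.2, continuous_kronU⟩

theorem tens_one (m n : ℕ) : tens m n 1 = 1 := kronU_one

/-- `A ↦ A ⊗ I_n : U_m → U_{mn}`. -/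
def kronR (m n : ℕ) : C(U m, U (m * n)) :=
  ⟨fun A => kronU A 1, continuous_kronU.comp (continuous_id.prodMk continuous_const)⟩

/-- `A ↦ I_n ⊗ A : U_m → U_{mn}`. -/
def kronL (m n : ℕ) : C(U m, U (m * n)) :=
  ⟨fun A => uCast (Nat.mul_comm n m) (kronU 1 A),
    (continuous_uCast _).comp (continuous_kronU.comp (continuous_const.prodMk continuous_id))⟩

/-- The stabilization `σ : U_k → U_N`, `A ↦ diag(A, I_{N-k})`, for `k ≤ N`. -/
def sigmaMap (k N : ℕ) (h : k ≤ N) : C(U k, U N) :=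
  ⟨fun A => uCast (Nat.add_sub_cancel' h) (bdiag2 A 1),
    (continuous_uCast _).comp (continuous_bdiag2.comp (continuous_id.prodMk continuous_const))⟩

theorem sigmaMap_one (k N : ℕ) (h : k ≤ N) : sigmaMap k N h 1 = 1 := by
  show uCast _ (bdiag2 1 1) = 1
  rw [bdiag2_one, uCast_one]

/-- The `r`-fold Kronecker power `A ↦ A ⊗ ⋯ ⊗ A : U_k → U_{k^r}`. -/
def kronPow {k : ℕ} : (r : ℕ) → U k → U (k ^ r)
  | 0 => fun _ => uCast (pow_zero k).symm 1
  | r + 1 => fun A => uCast (pow_succ k r).symm (kronU (kronPow r A) A)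

theorem continuous_kronPow {k : ℕ} (r : ℕ) : Continuous fun A : U k => kronPow r A := by
  induction r with
  | zero => exact continuous_const
  | succ r ih =>
    show Continuous fun A : U k => uCast (pow_succ k r).symm (kronU (kronPow r A) A)
    exact (continuous_uCast _).comp (continuous_kronU.comp (ih.prodMk continuous_id))

theorem kronPow_one {k : ℕ} (r : ℕ) : kronPow r (1 : U k) = 1 := by
  induction r with
  | zero => exact uCast_one _
  | succ r ih =>
    show uCast _ (kronU (kronPow r 1) 1) = 1
    rw [ih, kronU_one, uCast_one]

/-- The `r`-fold Kronecker power as a continuous map. -/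
def kronPowC (n r : ℕ) : C(U n, U (n ^ r)) := ⟨kronPow r, continuous_kronPow r⟩

theorem kronPowC_one (n r : ℕ) : kronPowC n r 1 = 1 := kronPow_one r

end Paper
namespace Paper

open Matrix

variable {ι : Type} [Fintype ι] [DecidableEq ι]

instance : ContinuousMul (Matrix.unitaryGroup ι ℂ) :=
  ⟨Continuous.subtype_mk ((continuous_subtype_val.comp continuous_fst).matrix_mul
    (continuous_subtype_val.comp continuous_snd)) _⟩

theorem continuous_star_u : Continuous (fun A : Matrix.unitaryGroup ι ℂ => star A) := by
  apply Continuous.subtype_mk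
  have : ∀ A : Matrix.unitaryGroup ι ℂ, ((star A : Matrix.unitaryGroup ι ℂ) : Matrix ι ι ℂ)
      = (A : Matrix ι ι ℂ)ᴴ := fun A => rfl
  exact continuous_subtype_val.matrix_conjTranspose

theorem uReindex_mul {κ : Type} [Fintype κ] [DecidableEq κ] (e : ι ≃ κ)
    (A B : Matrix.unitaryGroup ι ℂ) :
    uReindex e (A * B) = uReindex e A * uReindex e B := by
  apply Subtype.ext
  show Matrix.reindex e e (A.1 * B.1) = Matrix.reindex e e A.1 * Matrix.reindex e e B.1
  simp [Matrix.reindex_apply, Matrix.submatrix_mul_equiv]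

theorem uReindex_trans {κ μ : Type} [Fintype κ] [DecidableEq κ] [Fintype μ] [DecidableEq μ]
    (e : ι ≃ κ) (e' : κ ≃ μ) (A : Matrix.unitaryGroup ι ℂ) :
    uReindex e' (uReindex e A) = uReindex (e.trans e') A := by
  apply Subtype.ext
  show Matrix.reindex e' e' (Matrix.reindex e e A.1) = _
  ext i j
  simp [Matrix.reindex_apply, Matrix.submatrix_apply]

@[simp] theorem uReindex_refl (A : Matrix.unitaryGroup ι ℂ) :
    uReindex (Equiv.refl ι) A = A := by
  apply Subtype.ext; ext i j; simp [Matrix.reindex_apply]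

@[simp] theorem uCast_rfl {m : ℕ} (A : U m) : uCast rfl A = A := by
  apply Subtype.ext; ext i j
  simp [uCast, uReindex, Matrix.reindex_apply, Matrix.submatrix_apply]

end Paper
set_option linter.unusedSectionVars false

namespace Paper

open Topology.Homotopy GenLoop

/-- `Quotient.mk` into the homotopy group. -/
def mkπ {N X : Type} [TopologicalSpace X] {x : X} (p : Ω^ N X x) : HomotopyGroup N X x := ⟦p⟧

theorem mkπ_sound {N X : Type} [TopologicalSpace X] {x : X} {p q : Ω^ N X x}
    (h : GenLoop.Homotopic p q) : mkπ p = mkπ q := Quotient.sound h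

theorem mkπ_surjective {N X : Type} [TopologicalSpace X] [DecidableEq N] {x : X}
    (u : HomotopyGroup N X x) : ∃ p, u = mkπ p := ⟨u.out, (Quotient.out_eq u).symm⟩

theorem mul_spec' {N X : Type} [TopologicalSpace X] [DecidableEq N] [Nonempty N] {x : X}
    (i : N) (p q : Ω^ N X x) :
    mkπ p * mkπ q = mkπ (transAt i q p) := HomotopyGroup.mul_spec

theorem one_spec' {N X : Type} [TopologicalSpace X] [DecidableEq N] [Nonempty N] {x : X} :
    (1 : HomotopyGroup N X x) = mkπ const := HomotopyGroup.one_def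

section EH

variable {N : Type} [DecidableEq N] [Nonempty N]
variable {G : Type} [TopologicalSpace G] [Monoid G] [ContinuousMul G]

/-- Pointwise product of generalized loops in a topological monoid. -/
def gmul (a b : Ω^ N G 1) : Ω^ N G 1 :=
  ⟨a.1 * b.1, fun y hy => by
    simp only [ContinuousMap.mul_apply]
    rw [a.2 y hy, b.2 y hy, mul_one]⟩

@[simp] theorem gmul_apply (a b : Ω^ N G 1) (t : I^N) : gmul a b t = a t * b t := rfl

theorem gmul_homotopic {a a' b b' : Ω^ N G 1} (ha : Homotopic a a') (hb : Homotopic b b') :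
    Homotopic (gmul a b) (gmul a' b') := by
  obtain ⟨Ha⟩ := ha; obtain ⟨Hb⟩ := hb
  exact ⟨{ toContinuousMap := Ha.toContinuousMap * Hb.toContinuousMap
           map_zero_left := fun t => by
             show Ha (0, t) * Hb (0, t) = (gmul a b) t
             rw [Ha.apply_zero, Hb.apply_zero]; rfl
           map_one_left := fun t => by
             show Ha (1, t) * Hb (1, t) = (gmul a' b') t
             rw [Ha.apply_one, Hb.apply_one]; rfl
           prop' := fun t y hy => by
             have h1 : Ha (t, y) = a.1 y := Ha.prop' t y hy
             have h2 : Hb (t, y) = b.1 y := Hb.prop' t y hy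
             show Ha (t, y) * Hb (t, y) = (gmul a b) y
             rw [h1, h2]; rfl }⟩

theorem transAt_apply (i : N) (f g : Ω^ N G 1) (t : I^N) :
    transAt i f g t = if (t i : ℝ) ≤ 1 / 2
      then f (Function.update t i <| Set.projIcc 0 1 zero_le_one (2 * t i))
      else g (Function.update t i <| Set.projIcc 0 1 zero_le_one (2 * t i - 1)) := rfl

theorem gmul_transAt (i : N) (a b c d : Ω^ N G 1) :
    gmul (transAt i a b) (transAt i c d) = transAt i (gmul a c) (gmul b d) := by
  ext t
  simp only [gmul_apply, transAt_apply]
  split_ifs <;> rfl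

@[simp] theorem gmul_const (a : Ω^ N G 1) : gmul a const = a := by
  ext t; show a t * const t = a t; simp

@[simp] theorem const_gmul (a : Ω^ N G 1) : gmul const a = a := by
  ext t; show const t * a t = a t; simp

/-- Eckmann–Hilton: pointwise multiplication induces the group operation. -/
theorem mkπ_gmul (a b : Ω^ N G 1) :
    mkπ (gmul a b) = mkπ a * mkπ b := by
  classical
  inhabit N
  let m : HomotopyGroup N G 1 → HomotopyGroup N G 1 → HomotopyGroup N G 1 :=
    Quotient.map₂ gmul (fun a a' ha b b' hb => gmul_homotopic ha hb)
  have hm : ∀ p q : Ω^ N G 1, m (mkπ p) (mkπ q) = mkπ (gmul p q) := fun _ _ => rfl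
  have hinter : ∀ x y z w : HomotopyGroup N G 1,
      m (x * y) (z * w) = m x z * m y w := by
    intro x y z w
    obtain ⟨p, rfl⟩ := mkπ_surjective x
    obtain ⟨q, rfl⟩ := mkπ_surjective y
    obtain ⟨r, rfl⟩ := mkπ_surjective z
    obtain ⟨s, rfl⟩ := mkπ_surjective w
    rw [mul_spec' default, mul_spec' default, hm, gmul_transAt, ← mul_spec' default, hm, hm]
  have hmul : ∀ x w : HomotopyGroup N G 1, m x w = x * w := by
    intro x w
    have h := hinter x 1 1 w
    rw [mul_one, one_mul] at h
    rw [h]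
    obtain ⟨p, rfl⟩ := mkπ_surjective x
    obtain ⟨q, rfl⟩ := mkπ_surjective w
    rw [one_spec', hm, hm, gmul_const, const_gmul]
  rw [← hmul, hm]

end EH

end Paper
namespace Paper

open Topology.Homotopy GenLoop

section PiMap

variable {X Y Z : Type} [TopologicalSpace X] [TopologicalSpace Y] [TopologicalSpace Z]
variable {x : X} {y : Y} {z : Z}

theorem transAt_apply' {N : Type} [DecidableEq N] (i : N) (f g : Ω^ N X x) (t : I^N) :
    transAt i f g t = if (t i : ℝ) ≤ 1 / 2
      then f (Function.update t i <| Set.projIcc 0 1 zero_le_one (2 * t i))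
      else g (Function.update t i <| Set.projIcc 0 1 zero_le_one (2 * t i - 1)) := rfl

theorem πMap_mkπ (k : ℕ) (f : C(X, Y)) (hf : f x = y) (p : Ω^ (Fin k) X x) :
    πMap k f hf (mkπ p) = mkπ (loopMap f hf p) := rfl

theorem πMap_comp (k : ℕ) (f : C(X, Y)) (g : C(Y, Z)) (hf : f x = y) (hg : g y = z)
    (u : HomotopyGroup (Fin k) X x) :
    πMap k (g.comp f) (by simp [hf, hg]) u = πMap k g hg (πMap k f hf u) := by
  obtain ⟨p, rfl⟩ := mkπ_surjective u
  rfl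

theorem πMap_congr (k : ℕ) (f g : C(X, Y)) (h : f = g) (hf : f x = y) (hg : g x = y)
    (u : HomotopyGroup (Fin k) X x) :
    πMap k f hf u = πMap k g hg u := by subst h; rfl

theorem loopMap_transAt (k : ℕ) (f : C(X, Y)) (hf : f x = y) (i : Fin (k + 1))
    (a b : Ω^ (Fin (k + 1)) X x) :
    loopMap f hf (transAt i a b) = transAt i (loopMap f hf a) (loopMap f hf b) := by
  ext t
  show f (transAt i a b t) = transAt i (loopMap f hf a) (loopMap f hf b) t
  rw [transAt_apply', transAt_apply', apply_ite f]
  rfl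

theorem πMap_one (k : ℕ) (f : C(X, Y)) (hf : f x = y) :
    πMap (k + 1) f hf (1 : HomotopyGroup (Fin (k + 1)) X x) = 1 := by
  rw [one_spec', one_spec', πMap_mkπ]
  congr 1
  ext t
  exact hf

theorem πMap_hom (k : ℕ) (f : C(X, Y)) (hf : f x = y)
    (u v : HomotopyGroup (Fin (k + 1)) X x) :
    πMap (k + 1) f hf (u * v) = πMap (k + 1) f hf u * πMap (k + 1) f hf v := by
  obtain ⟨p, rfl⟩ := mkπ_surjective u
  obtain ⟨q, rfl⟩ := mkπ_surjective v
  rw [mul_spec' 0, πMap_mkπ, πMap_mkπ, πMap_mkπ, loopMap_transAt, ← mul_spec' 0]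

theorem πMap_pow (k : ℕ) (f : C(X, Y)) (hf : f x = y)
    (u : HomotopyGroup (Fin (k + 1)) X x) (m : ℕ) :
    πMap (k + 1) f hf (u ^ m) = πMap (k + 1) f hf u ^ m := by
  induction m with
  | zero => simpa using πMap_one k f hf
  | succ m ih => rw [pow_succ, pow_succ, πMap_hom, ih]

theorem πMap_mul {G : Type} [TopologicalSpace G] [Monoid G] [ContinuousMul G]
    (k : ℕ) (f g : C(X, G)) (hf : f x = 1) (hg : g x = 1)
    (u : HomotopyGroup (Fin (k + 1)) X x) :
    πMap (k + 1) (f * g) (by simp [hf, hg]) u =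
      πMap (k + 1) f hf u * πMap (k + 1) g hg u := by
  obtain ⟨p, rfl⟩ := mkπ_surjective u
  rw [πMap_mkπ, πMap_mkπ, πMap_mkπ, ← mkπ_gmul]
  congr 1

theorem πMap_homotopy (k : ℕ) (f g : C(X, Y)) (hf : f x = y) (hg : g x = y)
    (H : f.Homotopy g) (hH : ∀ t, H (t, x) = y) (u : HomotopyGroup (Fin k) X x) :
    πMap k f hf u = πMap k g hg u := by
  obtain ⟨p, rfl⟩ := mkπ_surjective u
  rw [πMap_mkπ, πMap_mkπ]
  apply mkπ_sound
  refine ⟨{ toContinuousMap := H.toContinuousMap.comp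
              ((ContinuousMap.id I).prodMap p.1)
            map_zero_left := fun t => by
              show H (0, p t) = f (p t)
              exact H.apply_zero _
            map_one_left := fun t => by
              show H (1, p t) = g (p t)
              exact H.apply_one _
            prop' := fun t s hs => by
              show H (t, p s) = f (p s)
              rw [GenLoop.boundary p s hs, hH, hf] }⟩

end PiMap

end Paper
namespace Paper

open Matrix Topology.Homotopy GenLoop

section Perm

variable {ι : Type} [Fintype ι] [DecidableEq ι]

theorem star_toMatrix (sg : Equiv.Perm ι) :
    star (sg.toPEquiv.toMatrix : Matrix ι ι ℂ) = sg.symm.toPEquiv.toMatrix := by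
  rw [Equiv.toPEquiv_symm, PEquiv.toMatrix_symm, Matrix.star_eq_conjTranspose]
  ext i j
  simp only [Matrix.conjTranspose_apply, Matrix.transpose_apply, PEquiv.toMatrix_apply]
  split_ifs <;> simp

theorem toMatrix_mul_symm (sg : Equiv.Perm ι) :
    (sg.toPEquiv.toMatrix : Matrix ι ι ℂ) * sg.symm.toPEquiv.toMatrix = 1 := by
  rw [← PEquiv.toMatrix_trans, ← Equiv.toPEquiv_trans, Equiv.self_trans_symm,
    Equiv.toPEquiv_refl, PEquiv.toMatrix_refl]

/-- The permutation matrix of `sg` as an element of the unitary group. -/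
def permU (sg : Equiv.Perm ι) : Matrix.unitaryGroup ι ℂ :=
  ⟨sg.toPEquiv.toMatrix, by
    rw [Matrix.mem_unitaryGroup_iff, star_toMatrix, toMatrix_mul_symm]⟩

@[simp] theorem permU_one : permU (1 : Equiv.Perm ι) = 1 := by
  apply Subtype.ext
  show ((1 : Equiv.Perm ι).toPEquiv.toMatrix : Matrix ι ι ℂ) = 1
  rw [show (1 : Equiv.Perm ι) = Equiv.refl ι from rfl, Equiv.toPEquiv_refl, PEquiv.toMatrix_refl]

theorem permU_mul (sg tu : Equiv.Perm ι) : permU (sg * tu) = permU tu * permU sg := by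
  apply Subtype.ext
  show ((tu.trans sg).toPEquiv.toMatrix : Matrix ι ι ℂ) = tu.toPEquiv.toMatrix * sg.toPEquiv.toMatrix
  rw [Equiv.toPEquiv_trans, PEquiv.toMatrix_trans]

theorem star_permU (sg : Equiv.Perm ι) : star (permU sg) = permU sg.symm :=
  Subtype.ext (star_toMatrix sg)

theorem uReindex_eq_conj (e : ι ≃ ι) (B : Matrix.unitaryGroup ι ℂ) :
    uReindex e B = permU e.symm * B * star (permU e.symm) := by
  apply Subtype.ext
  rw [star_permU]
  show Matrix.reindex e e B.1 = e.symm.toPEquiv.toMatrix * B.1 * e.symm.symm.toPEquiv.toMatrix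
  rw [PEquiv.toMatrix_toPEquiv_mul, PEquiv.mul_toMatrix_toPEquiv, Matrix.reindex_apply,
    Matrix.submatrix_submatrix]
  rfl

theorem joined_one_mul {A B : Matrix.unitaryGroup ι ℂ}
    (hA : Joined 1 A) (hB : Joined 1 B) : Joined 1 (A * B) := by
  obtain ⟨γ⟩ := hA; obtain ⟨δ⟩ := hB
  exact ⟨⟨⟨fun t => γ t * δ t, γ.continuous.mul δ.continuous⟩,
    by simp, by simp⟩⟩

theorem joined_one_swap (a b : ι) (hab : a ≠ b) :
    Joined (1 : Matrix.unitaryGroup ι ℂ) (permU (Equiv.swap a b)) := by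
  classical
  set v : ι → ℂ := fun i => if i = a then 1 else if i = b then -1 else 0 with hv
  have hvv : ∀ i, v i * v i = (if i = a then 1 else 0) + (if i = b then 1 else 0) := by
    intro i
    simp only [hv]
    split_ifs with h1 h2 <;> simp_all
  have hdot : (∑ i, v i * v i) = 2 := by
    simp_rw [hvv]
    rw [Finset.sum_add_distrib, Finset.sum_ite_eq' Finset.univ a, Finset.sum_ite_eq' Finset.univ b]
    simp; norm_num
  set P : Matrix ι ι ℂ := (1/2 : ℂ) • Matrix.vecMulVec v v with hP
  have hPapp : ∀ i j, P i j = (1/2 : ℂ) * (v i * v j) := by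
    intro i j; simp [hP, Matrix.vecMulVec_apply]
  have hPP : P * P = P := by
    ext i j
    rw [Matrix.mul_apply]
    simp_rw [hPapp]
    rw [show (∑ k, 1/2 * (v i * v k) * (1/2 * (v k * v j)))
        = (1/4 * (v i * v j)) * ∑ k, v k * v k by rw [Finset.mul_sum]; congr 1; ext k; ring]
    rw [hdot]; ring
  have hPstar : star P = P := by
    rw [Matrix.star_eq_conjTranspose]
    ext i j
    rw [Matrix.conjTranspose_apply]
    simp_rw [hPapp]
    have hre : ∀ i, star (v i) = v i := by
      intro i; simp only [hv]; split_ifs <;> simp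
    rw [star_mul', star_mul', hre, hre]
    have h2 : star ((1:ℂ)/2) = 1/2 := by
      simp [Complex.ext_iff]
    rw [h2]; ring
  clear_value P
  -- the path of unitaries
  have key : ∀ z : ℂ, z * star z = 1 → (1 + (z - 1) • P) ∈ Matrix.unitaryGroup ι ℂ := by
    intro z hz
    rw [Matrix.mem_unitaryGroup_iff]
    have hstar : star (1 + (z - 1) • P) = 1 + (star z - 1) • P := by
      rw [star_add, star_one, star_smul, hPstar, star_sub, star_one]
    rw [hstar]
    have expand : (1 + (z - 1) • P) * (1 + (star z - 1) • P)
        = 1 + ((z - 1) + (star z - 1) + (z - 1) * (star z - 1)) • P := by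
      simp only [mul_add, add_mul, one_mul, mul_one]
      rw [smul_mul_assoc, mul_smul_comm, smul_smul, hPP, add_smul, add_smul]
      abel
    rw [expand]
    have hc : (z - 1) + (star z - 1) + (z - 1) * (star z - 1) = 0 := by
      linear_combination hz
    rw [hc, zero_smul, add_zero]
  have hz : ∀ t : ℝ, Complex.exp (Real.pi * t * Complex.I)
      * star (Complex.exp (Real.pi * t * Complex.I)) = 1 := by
    intro t
    have : star (Complex.exp (Real.pi * t * Complex.I))
        = Complex.exp (-(Real.pi * t * Complex.I)) := by
      rw [Complex.star_def, ← Complex.exp_conj]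
      congr 1
      simp [Complex.ext_iff]
    rw [this, ← Complex.exp_add, add_neg_cancel, Complex.exp_zero]
  refine ⟨⟨⟨fun t => ⟨1 + (Complex.exp (Real.pi * t * Complex.I) - 1) • P, key _ (hz t)⟩, ?_⟩,
    ?_, ?_⟩⟩
  · apply Continuous.subtype_mk
    apply continuous_const.add
    apply Continuous.fun_smul _ continuous_const
    apply Continuous.sub _ continuous_const
    apply Complex.continuous_exp.comp
    have : Continuous fun t : I => ((t : ℝ) : ℂ) :=
      Complex.continuous_ofReal.comp continuous_subtype_val
    exact (continuous_const.mul this).mul continuous_const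
  · apply Subtype.ext
    show 1 + (Complex.exp (Real.pi * (0:ℝ) * Complex.I) - 1) • P = 1
    norm_num [Complex.exp_zero]
  · apply Subtype.ext
    show 1 + (Complex.exp (Real.pi * (1:ℝ) * Complex.I) - 1) • P
        = (Equiv.swap a b).toPEquiv.toMatrix
    have : (Real.pi : ℂ) * (1:ℝ) * Complex.I = Real.pi * Complex.I := by push_cast; ring
    rw [this, Complex.exp_pi_mul_I]
    ext i j
    rw [Matrix.add_apply, Matrix.smul_apply, hPapp, PEquiv.toMatrix_toPEquiv_eq, Matrix.submatrix_apply, id,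
      smul_eq_mul]
    have hrw : (1 : Matrix ι ι ℂ) i j + (-1 - 1) * (1 / 2 * (v i * v j))
        = (1 : Matrix ι ι ℂ) i j - v i * v j := by ring
    rw [hrw]
    clear hrw hPP hPstar hdot hvv key hz hPapp hP this
    clear P
    have hba : b ≠ a := hab.symm
    clear_value v
    simp only [hv, Matrix.one_apply, Equiv.swap_apply_def]
    by_cases hia : i = a <;> by_cases hib : i = b <;> by_cases hja : j = a <;>
      by_cases hjb : j = b <;>
      simp_all <;> norm_num <;> simp_all [eq_comm]

theorem joined_one_permU (sg : Equiv.Perm ι) :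
    Joined (1 : Matrix.unitaryGroup ι ℂ) (permU sg) := by
  refine Equiv.Perm.swap_induction_on sg ?_ ?_
  · rw [permU_one]
  · intro f x y hxy ih
    rw [permU_mul]
    exact joined_one_mul ih (joined_one_swap x y hxy)

end Perm

end Paper
namespace Paper

open Matrix Topology.Homotopy GenLoop

section Conj

variable {X : Type} [TopologicalSpace X] {x : X}
variable {ι : Type} [Fintype ι] [DecidableEq ι]

theorem πMap_conj (k : ℕ) (f g : C(X, Matrix.unitaryGroup ι ℂ)) (hf : f x = 1) (hg : g x = 1)
    (P : Matrix.unitaryGroup ι ℂ) (hP : Joined 1 P)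
    (h : ∀ A, g A = P * f A * star P) (u : HomotopyGroup (Fin k) X x) :
    πMap k g hg u = πMap k f hf u := by
  obtain ⟨γ⟩ := hP
  refine (πMap_homotopy k f g hf hg
    ⟨⟨fun q => γ q.1 * f q.2 * star (γ q.1), ?_⟩, ?_, ?_⟩ ?_ u).symm
  · exact ((γ.continuous.comp continuous_fst).mul
      (f.continuous.comp continuous_snd)).mul
      (continuous_star_u.comp (γ.continuous.comp continuous_fst))
  · intro A
    show γ 0 * f A * star (γ 0) = f A
    simp
  · intro A
    show γ 1 * f A * star (γ 1) = g A
    rw [h A]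
    simp
  · intro t
    show γ t * f x * star (γ t) = 1
    rw [hf, mul_one, Unitary.mul_star_self]

theorem πMap_uReindex_conj (k : ℕ) (f g : C(X, Matrix.unitaryGroup ι ℂ))
    (hf : f x = 1) (hg : g x = 1) (e : ι ≃ ι)
    (h : ∀ A, g A = uReindex e (f A)) (u : HomotopyGroup (Fin k) X x) :
    πMap k g hg u = πMap k f hf u := by
  refine πMap_conj k f g hf hg (permU e.symm) (joined_one_permU _) (fun A => ?_) u
  rw [h A, uReindex_eq_conj]

end Conj

section Blocks

variable {X : Type} [TopologicalSpace X] {x : X}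

/-- `diag(A, I)` indexed by `ι ⊕ c`. -/
def fromBlocksU {ι : Type} [Fintype ι] [DecidableEq ι] {c : Type} [Fintype c] [DecidableEq c]
    (A : Matrix.unitaryGroup ι ℂ) :
    Matrix.unitaryGroup (ι ⊕ c) ℂ :=
  ⟨Matrix.fromBlocks A.1 0 0 1, by
    rw [Matrix.mem_unitaryGroup_iff]
    have hA : A.1 * A.1ᴴ = 1 := A.2.2
    simp [Matrix.star_eq_conjTranspose, Matrix.fromBlocks_conjTranspose,
      Matrix.fromBlocks_multiply, hA, Matrix.fromBlocks_one]⟩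

theorem uReindex_sumCongr_fromBlocksU {ι : Type} [Fintype ι] [DecidableEq ι]
    {c c' : Type} [Fintype c] [DecidableEq c]
    [Fintype c'] [DecidableEq c'] (e : c ≃ c') (A : Matrix.unitaryGroup ι ℂ) :
    uReindex (Equiv.sumCongr (Equiv.refl ι) e) (fromBlocksU (c := c) A)
      = fromBlocksU (c := c') A := by
  apply Subtype.ext
  ext p q
  rcases p with p | p <;> rcases q with q | q <;>
    simp [fromBlocksU, Matrix.reindex_apply, Matrix.submatrix_apply, Matrix.one_apply,
      Equiv.sumCongr_symm, EmbeddingLike.apply_eq_iff_eq]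

/-- Two "block placement" maps induce the same map on homotopy groups. -/
theorem πMap_blocks (k : ℕ) {m N : ℕ} {c c' : Type} [Fintype c] [DecidableEq c]
    [Fintype c'] [DecidableEq c']
    (T : Fin m ⊕ c ≃ Fin N) (T' : Fin m ⊕ c' ≃ Fin N)
    (f g : C(U m, U N)) (hf : f 1 = 1) (hg : g 1 = 1)
    (h : ∀ A, f A = uReindex T (fromBlocksU A))
    (h' : ∀ A, g A = uReindex T' (fromBlocksU A))
    (u : HomotopyGroup (Fin k) (U m) 1) :
    πMap k f hf u = πMap k g hg u := by
  have hcard : Fintype.card c = Fintype.card c' := by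
    have h1 := Fintype.card_congr T
    have h2 := Fintype.card_congr T'
    rw [Fintype.card_sum] at h1 h2
    omega
  let e : c ≃ c' := Fintype.equivOfCardEq hcard
  let E : Fin N ≃ Fin N := T.symm.trans ((Equiv.sumCongr (Equiv.refl (Fin m)) e).trans T')
  refine (πMap_uReindex_conj k f g hf hg E (fun A => ?_) u).symm
  rw [h A, h' A, uReindex_trans]
  have : T.trans E = (Equiv.sumCongr (Equiv.refl (Fin m)) e).trans T' := by
    ext p; simp [E, Equiv.trans_apply]
  rw [this, ← uReindex_trans, uReindex_sumCongr_fromBlocksU]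

theorem sigmaMap_blocks {m N : ℕ} (h : m ≤ N) (A : U m) :
    sigmaMap m N h A =
      uReindex (finSumFinEquiv.trans (finCongr (Nat.add_sub_cancel' h)))
        (fromBlocksU (c := Fin (N - m)) A) := by
  apply Subtype.ext
  rw [← uReindex_trans]
  rfl

end Blocks

end Paper
namespace Paper

open Matrix Topology.Homotopy GenLoop

section Alg

variable {ι κ : Type} [Fintype ι] [DecidableEq ι] [Fintype κ] [DecidableEq κ]

@[simp] theorem uReindex_one' (e : ι ≃ κ) : uReindex e (1 : Matrix.unitaryGroup ι ℂ) = 1 :=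
  uReindex_one e

/-- `uReindex` as a monoid homomorphism. -/
def uReindexHom (e : ι ≃ κ) : Matrix.unitaryGroup ι ℂ →* Matrix.unitaryGroup κ ℂ where
  toFun := uReindex e
  map_one' := uReindex_one e
  map_mul' A B := uReindex_mul e A B

theorem blockDiagU_mul {r n : ℕ} (A B : Fin r → U n) :
    blockDiagU (fun j => A j * B j) = blockDiagU A * blockDiagU B := by
  apply Subtype.ext
  show (Matrix.reindex (bde r n) (bde r n)) (Matrix.blockDiagonal fun j => (A j * B j).1)
      = (Matrix.reindex (bde r n) (bde r n)) (Matrix.blockDiagonal fun j => (A j).1)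
        * (Matrix.reindex (bde r n) (bde r n)) (Matrix.blockDiagonal fun j => (B j).1)
  rw [Matrix.reindex_apply, Matrix.reindex_apply, Matrix.reindex_apply,
    Matrix.submatrix_mul_equiv, ← Matrix.blockDiagonal_mul]
  rfl

/-- `blockDiagU` as a monoid homomorphism. -/
def blockDiagUHom (r n : ℕ) : (Fin r → U n) →* U (r * n) where
  toFun := blockDiagU
  map_one' := blockDiagU_one
  map_mul' A B := blockDiagU_mul A B

theorem list_prod_apply_pi {α : Type} {M : Type} [Monoid M] (k : α) (l : List (α → M)) :
    l.prod k = (l.map (fun f => f k)).prod := by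
  induction l with
  | nil => rfl
  | cons f l ih => simp [List.prod_cons, ih]

theorem list_prod_delta {n : ℕ} {M : Type} [Monoid M] (A : M) (k : Fin n)
    (l : List (Fin n)) (hnd : l.Nodup) (hk : k ∈ l) :
    (l.map (fun j => if k = j then A else 1)).prod = A := by
  induction l with
  | nil => simp at hk
  | cons j l ih =>
    simp only [List.map_cons, List.prod_cons]
    rcases List.mem_cons.mp hk with h | h
    · subst h
      rw [if_pos rfl]
      have hnotin : k ∉ l := (List.nodup_cons.mp hnd).1
      have : (l.map (fun j => if k = j then A else 1)).prod = 1 := by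
        rw [List.prod_eq_one]
        intro x hx
        obtain ⟨j', hj', rfl⟩ := List.mem_map.mp hx
        rw [if_neg]
        rintro rfl
        exact hnotin hj'
      rw [this, mul_one]
    · have hne : k ≠ j := by
        rintro rfl
        exact (List.nodup_cons.mp hnd).1 h
      rw [if_neg hne, one_mul]
      exact ih (List.nodup_cons.mp hnd).2 h

theorem blockDiagU_const_eq_prod {r n : ℕ} (A : U n) :
    blockDiagU (fun _ : Fin r => A)
      = ((List.finRange r).map
          (fun j => blockDiagU (fun k => if k = j then A else 1))).prod := by
  have h1 : (fun _ : Fin r => A)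
      = ((List.finRange r).map (fun j => (fun k => if k = j then A else 1))).prod := by
    funext k
    rw [list_prod_apply_pi, List.map_map]
    exact (list_prod_delta A k (List.finRange r) (List.nodup_finRange r)
      (List.mem_finRange k)).symm
  rw [h1]
  rw [show blockDiagU ((List.map (fun j k => if k = j then A else 1) (List.finRange r)).prod)
      = (blockDiagUHom r n) ((List.map (fun j k => if k = j then A else 1) (List.finRange r)).prod)
      from rfl]
  rw [MonoidHom.map_list_prod (blockDiagUHom r n), List.map_map]
  rfl

end Alg

section Kron

theorem kronU_decomp {m n : ℕ} (A : U m) (B : U n) :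
    kronU A B = kronU A 1 * kronU 1 B := by
  apply Subtype.ext
  show (Matrix.reindex finProdFinEquiv finProdFinEquiv) (A.1 ⊗ₖ B.1)
      = (Matrix.reindex finProdFinEquiv finProdFinEquiv) (A.1 ⊗ₖ (1 : Matrix (Fin n) (Fin n) ℂ))
        * (Matrix.reindex finProdFinEquiv finProdFinEquiv) ((1 : Matrix (Fin m) (Fin m) ℂ) ⊗ₖ B.1)
  rw [Matrix.reindex_apply, Matrix.reindex_apply, Matrix.reindex_apply,
    Matrix.submatrix_mul_equiv, ← Matrix.mul_kronecker_mul, Matrix.mul_one, Matrix.one_mul]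

theorem kronU_one_left {m n : ℕ} (A : U n) :
    kronU (1 : U m) A = blockDiagU (fun _ : Fin m => A) := by
  apply Subtype.ext
  ext a b
  show ((1 : Matrix (Fin m) (Fin m) ℂ) ⊗ₖ A.1) (finProdFinEquiv.symm a) (finProdFinEquiv.symm b)
      = (Matrix.blockDiagonal fun _ : Fin m => A.1) ((bde m n).symm a) ((bde m n).symm b)
  rw [Matrix.kroneckerMap_apply, Matrix.blockDiagonal_apply]
  simp only [bde, Equiv.symm_trans_apply, Equiv.prodComm_symm, Equiv.prodComm_apply,
    Prod.fst_swap, Prod.snd_swap, Matrix.one_apply, ite_mul, one_mul, zero_mul]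
  rfl

theorem kronU_one_right {m n : ℕ} (A : U n) :
    kronU A (1 : U m) = uReindex ((bde m n).symm.trans finProdFinEquiv)
      (blockDiagU (fun _ : Fin m => A)) := by
  apply Subtype.ext
  ext a b
  show (A.1 ⊗ₖ (1 : Matrix (Fin m) (Fin m) ℂ)) (finProdFinEquiv.symm a) (finProdFinEquiv.symm b)
      = (Matrix.reindex ((bde m n).symm.trans finProdFinEquiv) ((bde m n).symm.trans finProdFinEquiv))
          ((Matrix.reindex (bde m n) (bde m n)) (Matrix.blockDiagonal fun _ : Fin m => A.1)) a b
  rw [Matrix.reindex_apply, Matrix.reindex_apply, Matrix.submatrix_apply, Matrix.submatrix_apply]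
  simp only [Equiv.symm_trans_apply, Equiv.symm_symm, Equiv.symm_apply_apply]
  rw [Matrix.kroneckerMap_apply, Matrix.blockDiagonal_apply]
  simp [Matrix.one_apply, mul_ite, mul_one, mul_zero]

end Kron

section Place

/-- The placement equivalence sending `Fin n` to the `j`-th block. -/
def placeEquiv {n r : ℕ} (j : Fin r) :
    (Fin n ⊕ {p : Fin n × Fin r // p.2 ≠ j}) ≃ Fin n × Fin r where
  toFun := Sum.elim (fun i => (i, j)) (fun p => p.1)
  invFun := fun p => if h : p.2 = j then Sum.inl p.1 else Sum.inr ⟨p, h⟩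
  left_inv := by
    rintro (i | ⟨p, hp⟩)
    · simp
    · simp [hp]
  right_inv := by
    rintro ⟨i, j'⟩
    by_cases h : j' = j <;> simp [h]

theorem sMap_blocks {n r : ℕ} (j : Fin r) (A : U n) :
    sMap n r j A = uReindex ((placeEquiv j).trans (bde r n)) (fromBlocksU A) := by
  apply Subtype.ext
  rw [← uReindex_trans]
  show (Matrix.reindex (bde r n) (bde r n))
      (Matrix.blockDiagonal fun k => ((if k = j then A else 1 : U n)).1)
      = (Matrix.reindex (bde r n) (bde r n)) ((uReindex (placeEquiv j) (fromBlocksU A)).1)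
  congr 1
  ext ⟨i1, j1⟩ ⟨i2, j2⟩
  rw [Matrix.blockDiagonal_apply, uReindex_val, Matrix.reindex_apply, Matrix.submatrix_apply]
  by_cases h1 : j1 = j <;> by_cases h2 : j2 = j <;>
    simp [placeEquiv, fromBlocksU, h1, h2, apply_ite (Subtype.val (p := (· ∈ Matrix.unitaryGroup (Fin n) ℂ))),
      Matrix.one_apply, Prod.ext_iff, Subtype.ext_iff] <;>
    aesop

end Place

section FB

variable {ι κ : Type} [Fintype ι] [DecidableEq ι] [Fintype κ] [DecidableEq κ]

theorem fromBlocksU_uReindex {c : Type} [Fintype c] [DecidableEq c]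
    (e : ι ≃ κ) (B : Matrix.unitaryGroup ι ℂ) :
    fromBlocksU (c := c) (uReindex e B)
      = uReindex (Equiv.sumCongr e (Equiv.refl c)) (fromBlocksU B) := by
  apply Subtype.ext
  ext p q
  rcases p with p | p <;> rcases q with q | q <;>
    simp [fromBlocksU, Matrix.reindex_apply, Matrix.submatrix_apply]

theorem fromBlocksU_fromBlocksU {c1 c2 : Type} [Fintype c1] [DecidableEq c1]
    [Fintype c2] [DecidableEq c2] (A : Matrix.unitaryGroup ι ℂ) :
    fromBlocksU (c := c2) (fromBlocksU (c := c1) A)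
      = uReindex (Equiv.sumAssoc ι c1 c2).symm (fromBlocksU (c := c1 ⊕ c2) A) := by
  apply Subtype.ext
  ext p q
  rcases p with (p | p) | p <;> rcases q with (q | q) | q <;>
    simp [fromBlocksU, Matrix.reindex_apply, Matrix.submatrix_apply, Matrix.one_apply]

end FB

end Paper
namespace Paper

open Matrix Topology.Homotopy GenLoop

section PiProd

variable {X : Type} [TopologicalSpace X] {x : X}

theorem πMap_id (k : ℕ) (h : (ContinuousMap.id X) x = x) (u : HomotopyGroup (Fin k) X x) :
    πMap k (ContinuousMap.id X) h u = u := by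
  obtain ⟨p, rfl⟩ := mkπ_surjective u
  rw [πMap_mkπ]
  congr 1

variable {G : Type} [TopologicalSpace G] [Monoid G] [ContinuousMul G]

theorem cprod_apply (l : List C(X, G)) (A : X) : l.prod A = (l.map (fun f => f A)).prod := by
  induction l with
  | nil => rfl
  | cons f l ih => simp [List.prod_cons, ih]

theorem cprod_one (l : List C(X, G)) (hl : ∀ f ∈ l, f x = 1) : l.prod x = 1 := by
  rw [cprod_apply, List.prod_eq_one]
  intro y hy
  obtain ⟨f, hf, rfl⟩ := List.mem_map.mp hy
  exact hl f hf

theorem πMap_const_one (k : ℕ) (h : (1 : C(X, G)) x = 1)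
    (u : HomotopyGroup (Fin (k + 1)) X x) :
    πMap (k + 1) (1 : C(X, G)) h u = 1 := by
  obtain ⟨p, rfl⟩ := mkπ_surjective u
  rw [πMap_mkπ, one_spec']
  congr 1

theorem πMap_list_prod (i : ℕ) {ι' : Type} (l : List ι') (F : ι' → C(X, G))
    (hF : ∀ j, F j x = 1) (hp : (l.map F).prod x = 1)
    (u : HomotopyGroup (Fin (i + 1)) X x) :
    πMap (i + 1) ((l.map F).prod) hp u
      = (l.map (fun j => πMap (i + 1) (F j) (hF j) u)).prod := by
  induction l with
  | nil =>
    simp only [List.map_nil, List.prod_nil]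
    exact πMap_const_one i hp u
  | cons j l ih =>
    simp only [List.map_cons, List.prod_cons]
    have hpl : (l.map F).prod x = 1 := by
      apply cprod_one
      intro f hf
      obtain ⟨j', _, rfl⟩ := List.mem_map.mp hf
      exact hF j'
    rw [πMap_congr (i + 1) _ (F j * (l.map F).prod) rfl hp (by simp [hF j, hpl]),
      πMap_mul i (F j) ((l.map F).prod) (hF j) hpl, ih hpl]

end PiProd

section Work

variable {X : Type} [TopologicalSpace X] {x : X}

/-- The workhorse: a map of the form `A ↦ E • diag(f A, …, f A)` (m copies) induces
`m` times the stabilization of `f` on homotopy groups. -/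
theorem πMap_copies (i : ℕ) {m k N : ℕ} (hk : k ≤ N) (E : Fin (m * k) ≃ Fin N)
    (f : C(X, U k)) (hf : f x = 1) (g : C(X, U N)) (hg : g x = 1)
    (h : ∀ A, g A = uReindex E (blockDiagU (fun _ : Fin m => f A)))
    (u : HomotopyGroup (Fin (i + 1)) X x) :
    πMap (i + 1) g hg u
      = (πMap (i + 1) (sigmaMap k N hk) (sigmaMap_one k N hk)
          (πMap (i + 1) f hf u)) ^ m := by
  -- the individual factors
  let G : Fin m → C(X, U N) := fun j =>
    ⟨fun A => uReindex E (sMap k m j (f A)),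
      (continuous_uReindex E).comp ((sMap k m j).continuous.comp f.continuous)⟩
  have hGone : ∀ j, G j x = 1 := fun j => by
    show uReindex E (sMap k m j (f x)) = 1
    rw [hf, sMap_one, uReindex_one]
  -- g is the product of the factors
  have hgprod : g = ((List.finRange m).map G).prod := by
    ext A
    rw [h A, cprod_apply, List.map_map]
    have : blockDiagU (fun _ : Fin m => f A)
        = ((List.finRange m).map
            (fun j => blockDiagU (fun t => if t = j then f A else 1))).prod :=
      blockDiagU_const_eq_prod (f A)
    rw [this]
    rw [show uReindex E (((List.finRange m).map
          (fun j => blockDiagU (fun t => if t = j then f A else 1))).prod)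
        = (uReindexHom E) (((List.finRange m).map
          (fun j => blockDiagU (fun t => if t = j then f A else 1))).prod) from rfl]
    rw [MonoidHom.map_list_prod, List.map_map]
    rfl
  have hgp : ((List.finRange m).map G).prod x = 1 := by
    apply cprod_one
    intro y hy
    obtain ⟨j, _, rfl⟩ := List.mem_map.mp hy
    exact hGone j
  rw [πMap_congr (i + 1) g (((List.finRange m).map G).prod) hgprod hg hgp,
    πMap_list_prod i (List.finRange m) G hGone hgp u]
  -- each factor induces the stabilization
  have hfactor : ∀ j : Fin m,
      πMap (i + 1) (G j) (hGone j) u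
        = πMap (i + 1) (sigmaMap k N hk) (sigmaMap_one k N hk) (πMap (i + 1) f hf u) := by
    intro j
    -- the head map
    let H : C(U k, U N) := ⟨fun B => uReindex E (sMap k m j B),
      (continuous_uReindex E).comp (sMap k m j).continuous⟩
    have hH : H 1 = 1 := by
      show uReindex E (sMap k m j 1) = 1
      rw [sMap_one, uReindex_one]
    have hcomp : G j = H.comp f := by ext A; rfl
    rw [πMap_congr (i + 1) (G j) (H.comp f) hcomp (hGone j) (by simp [ContinuousMap.comp_apply, hf, hH]),
      πMap_comp (i + 1) f H hf hH u]
    refine πMap_blocks (i + 1) (((placeEquiv j).trans (bde m k)).trans E)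
      (finSumFinEquiv.trans (finCongr (Nat.add_sub_cancel' hk))) H
      (sigmaMap k N hk) hH (sigmaMap_one k N hk) (fun B => ?_) (fun B => ?_) _
    · show uReindex E (sMap k m j B) = _
      rw [sMap_blocks, uReindex_trans]
    · exact sigmaMap_blocks hk B
  rw [show ((List.finRange m).map (fun j => πMap (i + 1) (G j) (hGone j) u))
      = (List.finRange m).map (fun _ =>
          πMap (i + 1) (sigmaMap k N hk) (sigmaMap_one k N hk) (πMap (i + 1) f hf u)) from
    List.map_congr_left (fun j _ => hfactor j)]
  rw [List.map_const', List.length_finRange, List.prod_replicate]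

/-- Stabilizations compose. -/
theorem πMap_sigma_comp (i : ℕ) {k N M : ℕ} (h1 : k ≤ N) (h2 : N ≤ M)
    (u : HomotopyGroup (Fin (i + 1)) (U k) 1) :
    πMap (i + 1) (sigmaMap N M h2) (sigmaMap_one N M h2)
        (πMap (i + 1) (sigmaMap k N h1) (sigmaMap_one k N h1) u)
      = πMap (i + 1) (sigmaMap k M (h1.trans h2)) (sigmaMap_one k M (h1.trans h2)) u := by
  rw [← πMap_comp (i + 1) (sigmaMap k N h1) (sigmaMap N M h2) (sigmaMap_one k N h1)
    (sigmaMap_one N M h2) u]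
  set T1 := finSumFinEquiv.trans (finCongr (Nat.add_sub_cancel' h1)) with hT1
  set T2 := finSumFinEquiv.trans (finCongr (Nat.add_sub_cancel' h2)) with hT2
  refine πMap_blocks (i + 1)
    ((Equiv.sumAssoc (Fin k) (Fin (N - k)) (Fin (M - N))).symm.trans
      ((Equiv.sumCongr T1 (Equiv.refl (Fin (M - N)))).trans T2))
    (finSumFinEquiv.trans (finCongr (Nat.add_sub_cancel' (h1.trans h2))))
    _ _ _ _ (fun A => ?_) (fun A => sigmaMap_blocks _ A) u
  show sigmaMap N M h2 (sigmaMap k N h1 A) = _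
  rw [sigmaMap_blocks h1 A, sigmaMap_blocks h2, fromBlocksU_uReindex, uReindex_trans,
    fromBlocksU_fromBlocksU, uReindex_trans, ← hT1, ← hT2]

end Work

end Paper
namespace Paper

open Matrix Topology.Homotopy GenLoop

theorem kronPow_zero_eq_one {k : ℕ} (A : U k) : kronPow 0 A = 1 := uCast_one _

theorem uCast_eq_uReindex {m k : ℕ} (h : m = k) (A : U m) :
    uCast h A = uReindex (finCongr h) A := rfl

theorem uCast_mul {m k : ℕ} (h : m = k) (A B : U m) :
    uCast h (A * B) = uCast h A * uCast h B := uReindex_mul _ A B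

theorem kron_formula_aux (n : ℕ) (hn : 0 < n) (i : ℕ) :
    ∀ r : ℕ, 0 < r → ∀ (hr' : n ≤ n ^ r) (u : HomotopyGroup (Fin (i + 1)) (U n) 1),
      πMap (i + 1) (kronPowC n r) (kronPowC_one n r) u =
        (πMap (i + 1) (sigmaMap n (n ^ r) hr') (sigmaMap_one n (n ^ r) hr') u)
          ^ (r * n ^ (r - 1)) := by
  intro r
  induction r with
  | zero => intro h; omega
  | succ r ih =>
    intro _ hr' u
    by_cases hr0 : r = 0
    · -- base case `r + 1 = 1`
      subst hr0
      have h : ∀ A : U n, kronPowC n 1 A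
          = uReindex (finCongr (pow_succ n 0).symm)
              (blockDiagU (fun _ : Fin (n ^ 0) => (ContinuousMap.id (U n)) A)) := by
        intro A
        show uCast (pow_succ n 0).symm (kronU (kronPow 0 A) A) = _
        rw [kronPow_zero_eq_one, kronU_one_left, uCast_eq_uReindex]
        rfl
      rw [πMap_copies i hr' (finCongr (pow_succ n 0).symm) (ContinuousMap.id (U n)) (ContinuousMap.id_apply 1)
        (kronPowC n 1) (kronPowC_one n 1) h u, πMap_id]
      norm_num
    · -- inductive step
      have hrpos : 0 < r := Nat.pos_of_ne_zero hr0
      have hnr : n ≤ n ^ r := Nat.le_self_pow hr0 n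
      have hpow : n ^ r ≤ n ^ (r + 1) := Nat.pow_le_pow_right hn (by omega)
      have er : n ^ r * n = n ^ (r + 1) := (pow_succ n r).symm
      -- the two factors
      set F1 : C(U n, U (n ^ (r + 1))) :=
        ⟨fun A => uCast er (kronU (kronPow r A) 1),
          (continuous_uCast er).comp (continuous_kronU.comp
            ((continuous_kronPow r).prodMk continuous_const))⟩ with hF1def
      set F2 : C(U n, U (n ^ (r + 1))) :=
        ⟨fun A => uCast er (kronU 1 A),
          (continuous_uCast er).comp (continuous_kronU.comp
            (continuous_const.prodMk continuous_id))⟩ with hF2def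
      have hF1one : F1 1 = 1 := by
        show uCast er (kronU (kronPow r 1) 1) = 1
        rw [kronPow_one, kronU_one, uCast_one]
      have hF2one : F2 1 = 1 := by
        show uCast er (kronU 1 1) = 1
        rw [kronU_one, uCast_one]
      have hsplit : kronPowC n (r + 1) = F1 * F2 := by
        refine ContinuousMap.ext fun A => ?_
        show uCast er (kronU (kronPow r A) A) = F1 A * F2 A
        rw [kronU_decomp, uCast_mul]
        rfl
      have hprod_one : (F1 * F2) 1 = 1 := by
        rw [ContinuousMap.mul_apply, hF1one, hF2one, mul_one]
      rw [πMap_congr (i + 1) (kronPowC n (r + 1)) (F1 * F2) hsplit (kronPowC_one n (r + 1))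
        hprod_one, πMap_mul i F1 F2 hF1one hF2one u]
      -- `F2` contributes `n ^ r` copies
      have hF2 : ∀ A : U n, F2 A
          = uReindex (finCongr er) (blockDiagU (fun _ : Fin (n ^ r) =>
              (ContinuousMap.id (U n)) A)) := by
        intro A
        show uCast er (kronU 1 A) = _
        rw [kronU_one_left, uCast_eq_uReindex]
        rfl
      rw [πMap_copies i hr' (finCongr er) (ContinuousMap.id (U n)) (ContinuousMap.id_apply 1) F2 hF2one hF2 u,
        πMap_id]
      -- `F1` is the head map composed with `kronPowC n r`
      set H : C(U (n ^ r), U (n ^ (r + 1))) :=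
        ⟨fun B => uCast er (kronU B 1),
          (continuous_uCast er).comp (continuous_kronU.comp
            (continuous_id.prodMk continuous_const))⟩ with hHdef
      have hHone : H 1 = 1 := by
        show uCast er (kronU 1 1) = 1
        rw [kronU_one, uCast_one]
      have hcomp : F1 = H.comp (kronPowC n r) := by
        refine ContinuousMap.ext fun A => ?_
        rfl
      have hcompone : (H.comp (kronPowC n r)) 1 = 1 := by
        rw [ContinuousMap.comp_apply, kronPowC_one, hHone]
      rw [πMap_congr (i + 1) F1 (H.comp (kronPowC n r)) hcomp hF1one hcompone,
        πMap_comp (i + 1) (kronPowC n r) H (kronPowC_one n r) hHone u,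
        ih hrpos hnr u]
      -- the head map contributes `n` copies
      have hH : ∀ B : U (n ^ r), H B
          = uReindex (((bde n (n ^ r)).symm.trans finProdFinEquiv).trans (finCongr er))
              (blockDiagU (fun _ : Fin n => (ContinuousMap.id (U (n ^ r))) B)) := by
        intro B
        show uCast er (kronU B 1) = _
        rw [kronU_one_right, uCast_eq_uReindex, uReindex_trans]
        rfl
      rw [πMap_pow, πMap_copies i hpow
        (((bde n (n ^ r)).symm.trans finProdFinEquiv).trans (finCongr er))
        (ContinuousMap.id (U (n ^ r))) (ContinuousMap.id_apply 1) H hHone hH _, πMap_id,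
        πMap_sigma_comp i hnr hpow u]
      have hswap : πMap (i + 1) (sigmaMap n (n ^ (r + 1)) (hnr.trans hpow))
          (sigmaMap_one n (n ^ (r + 1)) (hnr.trans hpow)) u
          = πMap (i + 1) (sigmaMap n (n ^ (r + 1)) hr')
            (sigmaMap_one n (n ^ (r + 1)) hr') u := rfl
      rw [hswap]
      rw [← pow_mul, ← pow_add]
      congr 1
      have hp : n ^ (r - 1) * n = n ^ r := by
        rw [← pow_succ]
        congr 1
        omega
      have : n * (r * n ^ (r - 1)) = r * n ^ r := by
        rw [mul_comm n (r * n ^ (r - 1)), mul_assoc, hp]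
      rw [this]
      have : (r + 1) * n ^ (r + 1 - 1) = (r + 1) * n ^ r := by norm_num
      rw [this]
      ring

end Paper
namespace Paper

/-- For `1 ≤ i < 2n` (written `i + 1` with `i + 1 < 2n`), the `r`-fold
Kronecker power `⊗^r : U_n → U_{n^r}` satisfies
`π_i(⊗^r)(x) = (π_i(σ)(x))^(r·n^(r-1))` in the abelian group `π_i(U_{n^r})` (written
multiplicatively), where `σ : A ↦ diag(A, I_{n^r - n})`. -/
theorem kronPow_induced_formula (n r : ℕ) (hn : 0 < n) (hr : 0 < r)
    (i : ℕ) (hi : i + 1 < 2 * n)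
    (x : HomotopyGroup (Fin (i + 1)) (U n) 1) :
    πMap (i + 1) (kronPowC n r) (kronPowC_one n r) x =
      (πMap (i + 1) (sigmaMap n (n ^ r) (Nat.le_self_pow hr.ne' n))
          (sigmaMap_one n (n ^ r) (Nat.le_self_pow hr.ne' n)) x) ^ (r * n ^ (r - 1)) :=
  kron_formula_aux n hn i r hr _ x

end Paper
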